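/- Let F_q be a finite field of characteristic 2, and let f : GSp(4,F_q) → ℂ be a function that is invariant under conjugation (f(ghg⁻¹) = f(h) for all g, h ∈ GSp(4,F_q)) and invariant under multiplication by scalar matrices (f(a·g) = f(g) for all a ∈ F_qˣ). Then for every X ∈ SL(2,F_q) the block matrix [[X, X],[0, X]] (4×4, in 2×2 blocks) lies in GSp(4,F_q), and ∑_{m ∈ M} f(mu) = (q−1)² · ∑_{X ∈ SL(2,F_q)} f([[X, X],[0, X]]). -/

import Mathlib

/-! In characteristic 2 every `A ∈ GL(2, F_q)` is uniquely `s • X` with `s ∈ F_qˣ` and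
`X ∈ SL(2, F_q)` (`s` is the square root of `det A`; squaring is bijective), so `M` is
parametrised by `F_qˣ × F_qˣ × SL(2, F_q)`. Writing `λ = t²`, the element `[[0, 1], [t, 1]]`
(in 2×2 blocks) of `GSp(4, F_q)` conjugates `m u` to `(t s) • [[X, X], [0, X]]`, so
`f (m u) = f [[X, X], [0, X]]` and every `X` occurs `(q - 1)²` times. -/

open Matrix

/-- The symplectic form `J`. -/
def Jmat (R : Type*) [CommRing R] : Matrix (Fin 4) (Fin 4) R :=
  !![0, 0, 0, 1; 0, 0, 1, 0; 0, -1, 0, 0; -1, 0, 0, 0]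

/-- `GSp(4,R)`: invertible matrices `g` with `gᵀ J g = μ(g) J` for some unit `μ(g)`. -/
def GSp4 (R : Type*) [CommRing R] : Set (Matrix (Fin 4) (Fin 4) R) :=
  {g | IsUnit g ∧ ∃ μ : Rˣ, gᵀ * Jmat R * g = (μ : R) • Jmat R}

/-- The set `M`: block matrices with rows `(a,b,0,0)`, `(c,d,0,0)`, `(0,0,λa,−λb)`,
`(0,0,−λc,λd)` with `λ` a unit and `ad − bc` a unit. -/
def Mset (R : Type*) [CommRing R] : Set (Matrix (Fin 4) (Fin 4) R) :=
  {g | ∃ a b c d lam : R, IsUnit lam ∧ IsUnit (a * d - b * c) ∧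
    g = !![a, b, 0, 0; c, d, 0, 0; 0, 0, lam * a, -(lam * b); 0, 0, -(lam * c), lam * d]}

/-- The element `u`. -/
def uEl (R : Type*) [CommRing R] : Matrix (Fin 4) (Fin 4) R :=
  !![0, 0, 1, 0; 0, 0, 0, -1; 1, 0, 0, 0; 0, -1, 0, 0]

/-- The block matrix `[[X, X], [0, X]]`. -/
def blkXX (R : Type*) [CommRing R] (X : Matrix (Fin 2) (Fin 2) R) :
    Matrix (Fin 4) (Fin 4) R :=
  !![X 0 0, X 0 1, X 0 0, X 0 1;
     X 1 0, X 1 1, X 1 0, X 1 1;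
     0, 0, X 0 0, X 0 1;
     0, 0, X 1 0, X 1 1]
section GSp4

variable {R : Type*} [CommRing R]

theorem Jmat_mul_Jmat : Jmat R * Jmat R = -1 := by
  ext i j; fin_cases i <;> fin_cases j <;> simp [Jmat, mul_apply, Fin.sum_univ_four]

theorem mem_GSp4_of_transpose_mul_Jmat_mul {g : Matrix (Fin 4) (Fin 4) R} (μ : Rˣ)
    (h : gᵀ * Jmat R * g = (μ : R) • Jmat R) : g ∈ GSp4 R := by
  have hinv : (-(↑μ⁻¹ : R) • (Jmat R * gᵀ * Jmat R)) * g = 1 := by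
    rw [smul_mul_assoc, mul_assoc, mul_assoc, ← mul_assoc gᵀ, h, mul_smul_comm, Jmat_mul_Jmat,
      smul_smul, neg_mul, Units.inv_mul, neg_smul, one_smul, neg_neg]
  exact ⟨(isUnit_iff_isUnit_det g).mpr (isUnit_det_of_left_inverse hinv), μ, h⟩

def Mmat (A : Matrix (Fin 2) (Fin 2) R) (lam : R) : Matrix (Fin 4) (Fin 4) R :=
  !![A 0 0, A 0 1, 0, 0; A 1 0, A 1 1, 0, 0;
     0, 0, lam * A 0 0, -(lam * A 0 1); 0, 0, -(lam * A 1 0), lam * A 1 1]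

theorem mem_Mset_iff {m : Matrix (Fin 4) (Fin 4) R} :
    m ∈ Mset R ↔ ∃ A lam, IsUnit A.det ∧ IsUnit lam ∧ Mmat A lam = m := by
  constructor
  · rintro ⟨a, b, c, d, lam, hlam, hdet, rfl⟩
    exact ⟨!![a, b; c, d], lam, by rwa [det_fin_two_of], hlam, rfl⟩
  · rintro ⟨A, lam, hA, hlam, rfl⟩
    exact ⟨A 0 0, A 0 1, A 1 0, A 1 1, lam, hlam, by rwa [← det_fin_two], rfl⟩

theorem eq_and_smul_eq_of_Mmat_eq {A B : Matrix (Fin 2) (Fin 2) R} {lam mu : R}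
    (h : Mmat A lam = Mmat B mu) : A = B ∧ lam • A = mu • B := by
  have e : ∀ i j, Mmat A lam i j = Mmat B mu i j := fun i j => by rw [h]
  refine ⟨?_, ?_⟩ <;> ext i j <;> fin_cases i <;> fin_cases j
  exacts [e 0 0, e 0 1, e 1 0, e 1 1, e 2 2, neg_inj.mp (e 2 3), neg_inj.mp (e 3 2), e 3 3]

def conjMat (t : R) : Matrix (Fin 4) (Fin 4) R :=
  !![0, 0, 1, 0; 0, 0, 0, 1; t, 0, 1, 0; 0, t, 0, 1]

section CharTwo

variable [CharP R 2]

theorem blkXX_mem_GSp4 {X : Matrix (Fin 2) (Fin 2) R} (hX : X.det = 1) :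
    blkXX R X ∈ GSp4 R := by
  refine mem_GSp4_of_transpose_mul_Jmat_mul 1 ?_
  rw [det_fin_two] at hX
  ext i j
  fin_cases i <;> fin_cases j <;> simp [Jmat, blkXX, mul_apply, Fin.sum_univ_four] <;> grind

theorem Mmat_mul_uEl_mem_GSp4 {A : Matrix (Fin 2) (Fin 2) R} {lam : R} (hA : IsUnit A.det)
    (hlam : IsUnit lam) : Mmat A lam * uEl R ∈ GSp4 R := by
  refine mem_GSp4_of_transpose_mul_Jmat_mul (hlam.unit * hA.unit) ?_
  simp only [Units.val_mul, IsUnit.unit_spec, det_fin_two]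
  ext i j
  fin_cases i <;> fin_cases j <;>
    simp [Jmat, Mmat, uEl, mul_apply, Fin.sum_univ_four] <;> grind

theorem conjMat_mem_GSp4 {t : R} (ht : IsUnit t) : conjMat t ∈ GSp4 R := by
  refine mem_GSp4_of_transpose_mul_Jmat_mul ht.unit ?_
  simp only [IsUnit.unit_spec]
  ext i j
  fin_cases i <;> fin_cases j <;>
    simp [Jmat, conjMat, mul_apply, Fin.sum_univ_four] <;> grind

theorem conjMat_mul_Mmat_mul_uEl (s t : R) (X : Matrix (Fin 2) (Fin 2) R) :
    conjMat t * (Mmat (s • X) (t * t) * uEl R) = (t * s) • blkXX R X * conjMat t := by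
  ext i j; fin_cases i <;> fin_cases j <;>
    simp [conjMat, Mmat, uEl, blkXX, mul_apply, Fin.sum_univ_four] <;> grind

end CharTwo

end GSp4

section FiniteFieldCharTwo

variable {F : Type*} [Field F] [Fintype F] [CharP F 2]

theorem exists_units_smul_SL2_eq {A : Matrix (Fin 2) (Fin 2) F} (hA : IsUnit A.det) :
    ∃ (s : Fˣ) (X : SpecialLinearGroup (Fin 2) F),
      (s : F) • (X : Matrix (Fin 2) (Fin 2) F) = A := by
  obtain ⟨s, hs⟩ := FiniteField.isSquare_of_char_two (ringChar.eq F 2) A.det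
  have hs0 : s ≠ 0 := by rintro rfl; simp [hs] at hA
  refine ⟨Units.mk0 s hs0, ⟨s⁻¹ • A, ?_⟩, ?_⟩
  · rw [det_smul, Fintype.card_fin, hs]; field_simp
  · simp [smul_smul, hs0]

omit [Fintype F] in
theorem units_smul_SL2_inj {s s' : Fˣ} {X X' : SpecialLinearGroup (Fin 2) F}
    (h : (s : F) • (X : Matrix (Fin 2) (Fin 2) F) =
      (s' : F) • (X' : Matrix (Fin 2) (Fin 2) F)) :
    s = s' ∧ X = X' := by
  have hdet := congrArg det h
  rw [det_smul, det_smul, X.2, X'.2, mul_one, mul_one] at hdet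
  have hss' : s = s' := Units.ext (CharTwo.sq_inj.mp hdet)
  subst hss'
  exact ⟨rfl, Subtype.ext (smul_right_injective _ s.ne_zero h)⟩

theorem bijOn_Mmat_units_smul_SL2 :
    Set.BijOn (fun p : Fˣ × Fˣ × SpecialLinearGroup (Fin 2) F =>
      Mmat ((p.1 : F) • (p.2.2 : Matrix (Fin 2) (Fin 2) F)) p.2.1) Set.univ (Mset F) := by
  refine ⟨fun ⟨s, lam, X⟩ _ => mem_Mset_iff.mpr ⟨_, _, ?_, lam.isUnit, rfl⟩, ?_, ?_⟩
  · simp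
  · rintro ⟨s, lam, X⟩ - ⟨s', lam', X'⟩ - h
    obtain ⟨hA, hlam⟩ := eq_and_smul_eq_of_Mmat_eq h
    obtain ⟨rfl, rfl⟩ := units_smul_SL2_inj hA
    have hA0 : (s : F) • (X : Matrix (Fin 2) (Fin 2) F) ≠ 0 := by
      intro h0
      simpa [det_smul, X.2] using congrArg det h0
    obtain rfl : lam = lam' := Units.ext (smul_left_injective F hA0 hlam)
    rfl
  · intro m hm
    obtain ⟨A, lam, hA, hlam, rfl⟩ := mem_Mset_iff.mp hm
    obtain ⟨s, X, rfl⟩ := exists_units_smul_SL2_eq hA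
    exact ⟨⟨s, hlam.unit, X⟩, trivial, rfl⟩

theorem apply_Mmat_smul_mul_uEl {f : Matrix (Fin 4) (Fin 4) F → ℂ}
    (hconj : ∀ g h : Matrix (Fin 4) (Fin 4) F,
      g ∈ GSp4 F → h ∈ GSp4 F → f (g * h * g⁻¹) = f h)
    (hscal : ∀ a : F, a ≠ 0 → ∀ g ∈ GSp4 F, f (a • g) = f g)
    {s lam : F} (hs : s ≠ 0) (hlam : lam ≠ 0) {X : Matrix (Fin 2) (Fin 2) F} (hX : X.det = 1) :
    f (Mmat (s • X) lam * uEl F) = f (blkXX F X) := by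
  obtain ⟨t, rfl⟩ := FiniteField.isSquare_of_char_two (ringChar.eq F 2) lam
  have ht : t ≠ 0 := by rintro rfl; simp at hlam
  have hg := conjMat_mem_GSp4 (Ne.isUnit ht)
  have hm : Mmat (s • X) (t * t) * uEl F ∈ GSp4 F :=
    Mmat_mul_uEl_mem_GSp4 (by simp [hX, hs]) (Ne.isUnit hlam)
  calc f (Mmat (s • X) (t * t) * uEl F)
      = f (conjMat t * (Mmat (s • X) (t * t) * uEl F) * (conjMat t)⁻¹) :=
        (hconj _ _ hg hm).symm
    _ = f ((t * s) • blkXX F X) := by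
      rw [conjMat_mul_Mmat_mul_uEl, mul_nonsing_inv_cancel_right _ _
        ((isUnit_iff_isUnit_det _).mp hg.1)]
    _ = f (blkXX F X) := hscal _ (mul_ne_zero ht hs) _ (blkXX_mem_GSp4 hX)

end FiniteFieldCharTwo

/-- Let `F_q` have characteristic 2 and let `f` be a conjugation-invariant,
scalar-invariant function on `GSp(4,F_q)`.  For every `X ∈ SL(2,F_q)` the block matrix
`[[X,X],[0,X]]` lies in `GSp(4,F_q)`, and
`∑_{m ∈ M} f(mu) = (q−1)² ∑_{X ∈ SL(2,F_q)} f([[X,X],[0,X]])`. -/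
theorem sum_over_Mu_eq_sum_over_SL2_char_two
    (Fq : Type*) [Field Fq] [Fintype Fq] (hchar : ringChar Fq = 2)
    (f : Matrix (Fin 4) (Fin 4) Fq → ℂ)
    (hconj : ∀ g h : Matrix (Fin 4) (Fin 4) Fq,
      g ∈ GSp4 Fq → h ∈ GSp4 Fq → f (g * h * g⁻¹) = f h)
    (hscal : ∀ a : Fq, a ≠ 0 → ∀ g ∈ GSp4 Fq, f (a • g) = f g) :
    (∀ X : Matrix (Fin 2) (Fin 2) Fq, X.det = 1 → blkXX Fq X ∈ GSp4 Fq) ∧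
    ∑ᶠ m ∈ Mset Fq, f (m * uEl Fq) =
      ((Fintype.card Fq : ℂ) - 1) ^ 2 *
        ∑ᶠ X ∈ {X : Matrix (Fin 2) (Fin 2) Fq | X.det = 1}, f (blkXX Fq X) := by
  have : CharP Fq 2 := ringChar.of_eq hchar
  classical
  refine ⟨fun X hX => blkXX_mem_GSp4 hX, ?_⟩
  calc ∑ᶠ m ∈ Mset Fq, f (m * uEl Fq)
      = ∑ᶠ p ∈ (Set.univ : Set (Fqˣ × Fqˣ × SpecialLinearGroup (Fin 2) Fq)),
          f (blkXX Fq p.2.2) :=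
        (finsum_mem_eq_of_bijOn _ bijOn_Mmat_units_smul_SL2 fun p _ =>
          (apply_Mmat_smul_mul_uEl hconj hscal p.1.ne_zero p.2.1.ne_zero p.2.2.2).symm).symm
    _ = ((Fintype.card Fq : ℂ) - 1) ^ 2 *
          ∑ X : SpecialLinearGroup (Fin 2) Fq, f (blkXX Fq X) := by
      rw [finsum_mem_univ, finsum_eq_sum_of_fintype]
      simp only [Fintype.sum_prod_type, Finset.sum_const, Finset.card_univ, Fintype.card_units,
        nsmul_eq_mul, Nat.cast_sub Fintype.card_pos, Nat.cast_one]
      ring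
    _ = _ := by
      rw [← finsum_eq_sum_of_fintype]
      exact congrArg _ (finsum_set_coe_eq_finsum_mem (f := fun X => f (blkXX Fq X)) _)
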